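/- Abstract a priori bound for the primal variable from coercivity: Let U be a real normed space, U_h ⊆ U a subspace, S : U → U' bounded linear with ‖S u‖ ≤ C_S ‖u‖ and coercive on U_h: ⟨S w, w⟩ ≥ c ‖w‖² for all w ∈ U_h with c > 0. Let Λ be a normed space with pairing b satisfying |b(v, μ)| ≤ ‖v‖ ‖μ‖_Λ. Suppose u ∈ U, u_h ∈ U_h, λ, λ_H ∈ Λ satisfy ⟨S(u − u_h), v_h⟩ = b(v_h, λ − λ_H) for all v_h ∈ U_h. Then for all v_h ∈ U_h and all λ̃_H ∈ Λ: c ‖u_h − v_h‖ ≤ C_S ‖u − v_h‖ + ‖λ̃_H − λ‖_Λ + ‖λ̃_H − λ_H‖_Λ, and consequently ‖u − u_h‖ ≤ (1 + C_S/c) inf_{v_h ∈ U_h} ‖u − v_h‖ + (1/c) inf_{λ̃_H} (‖λ̃_H − λ‖_Λ + ‖λ̃_H − λ_H‖_Λ). -/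
import Mathlib


theorem stmt10 {U : Type*} [NormedAddCommGroup U] [NormedSpace ℝ U]
    {Λ : Type*} [NormedAddCommGroup Λ] [NormedSpace ℝ Λ]
    (Uh : Submodule ℝ U)
    (S : U →ₗ[ℝ] U →ₗ[ℝ] ℝ) (CS : ℝ) (hCS : 0 ≤ CS)
    (hS : ∀ w v : U, |S w v| ≤ CS * ‖w‖ * ‖v‖)
    (c : ℝ) (hc : 0 < c) (hcoer : ∀ w ∈ Uh, c * ‖w‖ ^ 2 ≤ S w w)
    (b : U →ₗ[ℝ] Λ →ₗ[ℝ] ℝ) (hb : ∀ v m, |b v m| ≤ ‖v‖ * ‖m‖)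
    (u : U) (uh : U) (huh : uh ∈ Uh) (l lH : Λ)
    (hGal : ∀ vh ∈ Uh, S (u - uh) vh = b vh (l - lH)) :
    (∀ vh ∈ Uh, ∀ ltH : Λ,
        c * ‖uh - vh‖ ≤ CS * ‖u - vh‖ + ‖ltH - l‖ + ‖ltH - lH‖) ∧
    (∀ vh ∈ Uh, ∀ ltH : Λ,
        ‖u - uh‖ ≤ (1 + CS/c) * ‖u - vh‖ + (1/c) * (‖ltH - l‖ + ‖ltH - lH‖)) := by
  have key : ∀ vh ∈ Uh, ∀ ltH : Λ,
      c * ‖uh - vh‖ ≤ CS * ‖u - vh‖ + ‖ltH - l‖ + ‖ltH - lH‖ := by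
    intro vh hvh ltH
    set w := uh - vh with hw
    have hwUh : w ∈ Uh := Uh.sub_mem huh hvh
    have hsum : S w w = S (u - vh) w - b w (l - lH) := by
      have h1 : S (u - uh) w = b w (l - lH) := hGal w hwUh
      have h2 : S (u - vh) w - S (u - uh) w = S w w := by
        have : (u - vh) - (u - uh) = w := by rw [hw]; abel
        rw [← this]; simp [map_sub]; ring
      linarith
    have hbd : S w w ≤ (CS * ‖u - vh‖ + (‖ltH - l‖ + ‖ltH - lH‖)) * ‖w‖ := by
      have h3 : |S (u - vh) w| ≤ CS * ‖u - vh‖ * ‖w‖ := hS _ _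
      have h4 : |b w (l - lH)| ≤ ‖w‖ * ‖l - lH‖ := hb _ _
      have h5 : ‖l - lH‖ ≤ ‖ltH - l‖ + ‖ltH - lH‖ := by
        calc ‖l - lH‖ = ‖(ltH - lH) - (ltH - l)‖ := by congr 1; abel
          _ ≤ ‖ltH - lH‖ + ‖ltH - l‖ := norm_sub_le _ _
          _ = ‖ltH - l‖ + ‖ltH - lH‖ := by ring
      have h6 : |b w (l - lH)| ≤ ‖w‖ * (‖ltH - l‖ + ‖ltH - lH‖) :=
        h4.trans (mul_le_mul_of_nonneg_left h5 (norm_nonneg _))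
      have := abs_le.mp h3
      have := abs_le.mp h6
      nlinarith [norm_nonneg w]
    have hcoerw := hcoer w hwUh
    rcases eq_or_lt_of_le (norm_nonneg w) with h0 | h0
    · rw [← h0, mul_zero]
      positivity
    · have : c * ‖w‖ * ‖w‖ ≤ (CS * ‖u - vh‖ + (‖ltH - l‖ + ‖ltH - lH‖)) * ‖w‖ := by
        nlinarith
      have := le_of_mul_le_mul_right this h0
      linarith
  refine ⟨key, fun vh hvh ltH => ?_⟩
  have h1 := key vh hvh ltH
  have h2 : ‖u - uh‖ ≤ ‖u - vh‖ + ‖uh - vh‖ := by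
    calc ‖u - uh‖ = ‖(u - vh) - (uh - vh)‖ := by congr 1; abel
      _ ≤ _ := norm_sub_le _ _
  have h3 : ‖uh - vh‖ ≤ (CS * ‖u - vh‖ + ‖ltH - l‖ + ‖ltH - lH‖) / c :=
    (le_div_iff₀' hc).mpr h1
  have hne : c ≠ 0 := ne_of_gt hc
  calc ‖u - uh‖ ≤ ‖u - vh‖ + (CS * ‖u - vh‖ + ‖ltH - l‖ + ‖ltH - lH‖) / c :=
        le_trans h2 (by linarith)
    _ = (1 + CS/c) * ‖u - vh‖ + (1/c) * (‖ltH - l‖ + ‖ltH - lH‖) := by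
        field_simp; ring
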